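/- For every cycle C_n with n ≥ 3, EC(C_n) ≤ 6. -/

import Mathlib

open SimpleGraph

/-- Two edges (as unordered pairs of vertices) share an endpoint. -/
def SharesEndpoint {V : Type*} (e f : Sym2 V) : Prop := ∃ v, v ∈ e ∧ v ∈ f

/-- `D` is an edge dominating set of `G`: `D` consists of edges of `G` and every
edge of `G` outside `D` shares an endpoint with some edge of `D`. -/
def IsEdgeDominating {V : Type*} (G : SimpleGraph V) (D : Set (Sym2 V)) : Prop :=
  D ⊆ G.edgeSet ∧ ∀ e ∈ G.edgeSet \ D, ∃ f ∈ D, SharesEndpoint e f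

/-- Two disjoint edge sets form an edge coalition: neither is an edge dominating
set but their union is. -/
def IsEdgeCoalition {V : Type*} (G : SimpleGraph V) (E₁ E₂ : Set (Sym2 V)) : Prop :=
  Disjoint E₁ E₂ ∧ ¬ IsEdgeDominating G E₁ ∧ ¬ IsEdgeDominating G E₂ ∧
    IsEdgeDominating G (E₁ ∪ E₂)

/-- An ec-partition of `G`: a partition of the edge set of `G` (into nonempty,
pairwise disjoint parts) such that every part either is a singleton edge
dominating set, or is not an edge dominating set but forms an edge coalition
with another part. -/
def IsECPartition {V : Type*} (G : SimpleGraph V) (P : Set (Set (Sym2 V))) : Prop :=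
  (∀ A ∈ P, A.Nonempty) ∧
  P.Pairwise Disjoint ∧
  ⋃₀ P = G.edgeSet ∧
  ∀ A ∈ P, ((∃ e, A = {e}) ∧ IsEdgeDominating G A) ∨
    (¬ IsEdgeDominating G A ∧ ∃ B ∈ P, B ≠ A ∧ IsEdgeCoalition G A B)

/-- The edge coalition number `EC(G)`: the maximum number of parts over all
ec-partitions of `G`. -/
noncomputable def edgeCoalitionNumber {V : Type*} (G : SimpleGraph V) : ℕ :=
  sSup {k | ∃ P, IsECPartition G P ∧ P.ncard = k}

/-!
In a graph of maximum degree at most two every edge shares an endpoint with at most three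
edges, itself included. Call two parts of an ec-partition adjacent when their union dominates.
For an edge `e`, the parts meeting the closed neighbourhood `N[e]` are pairwise disjoint, so there
are at most three of them, and they form a vertex cover of this coalition graph. Taking `e` inside
a part, or `e` with `N[e]` missing a non-dominating part, every part lies in one such cover and
outside another. With at least seven edges no part dominates on its own, so every part has a
neighbour; a graph with these properties has at most six vertices, since two disjoint edges
leave room for at most one further vertex on each side, and a single edge `ab` covering all edges
leaves only the at most six neighbours of `a` and `b`.
-/

lemma Set.ncard_le_of_pairwise_disjoint_inter_nonempty {ι α : Type*} {A : ι → Set α}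
    {s : Set ι} {t : Set α} (ht : t.Finite) (hA : Pairwise fun i j => Disjoint (A i) (A j))
    (hs : ∀ i ∈ s, (A i ∩ t).Nonempty) : s.ncard ≤ t.ncard := by
  have : ∀ i : s, ∃ x : t, x.1 ∈ A i := fun i =>
    let ⟨x, hxA, hxt⟩ := hs i i.2
    ⟨⟨x, hxt⟩, hxA⟩
  choose f hf using this
  have := ht.to_subtype
  rw [← Nat.card_coe_set_eq, ← Nat.card_coe_set_eq]
  refine Nat.card_le_card_of_injective f fun i j hij => Subtype.ext ?_
  by_contra hne
  exact Set.disjoint_left.mp (hA hne) (hf i) (hij ▸ hf j)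

namespace SimpleGraph

variable {β : Type*} {H : SimpleGraph β} {c : Set β}

lemma IsVertexCover.neighborSet_subset (hc : H.IsVertexCover c) {v : β} (hv : v ∉ c) :
    H.neighborSet v ⊆ c :=
  fun _ hw => (hc hw).resolve_left hv

variable [Finite β]

lemma IsVertexCover.eq_of_adj (hc : H.IsVertexCover c) (hc3 : c.ncard ≤ 3) {v y₁ y₂ y₃ : β}
    (hv : v ∉ c) (h₁ : H.Adj v y₁) (h₂ : H.Adj v y₂) (h₃ : H.Adj v y₃)
    (h₁₂ : y₁ ≠ y₂) (h₁₃ : y₁ ≠ y₃) (h₂₃ : y₂ ≠ y₃) : c = {y₁, y₂, y₃} := by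
  have hsub : {y₁, y₂, y₃} ⊆ c := by
    rintro y (rfl | rfl | rfl) <;> apply hc.neighborSet_subset hv <;> assumption
  exact (Set.eq_of_subset_of_ncard_le hsub
    (by rwa [Set.ncard_eq_three.mpr ⟨y₁, y₂, y₃, h₁₂, h₁₃, h₂₃, rfl⟩])).symm

/-- A vertex cover through a seventh vertex would need a fourth element. -/
lemma not_three_disjoint_adj (h7 : 6 < Nat.card β)
    (hin : ∀ v, ∃ c, v ∈ c ∧ c.ncard ≤ 3 ∧ H.IsVertexCover c) {a₁ a₂ b₁ b₂ c₁ c₂ : β}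
    (ha : H.Adj a₁ a₂) (hb : H.Adj b₁ b₂) (hc : H.Adj c₁ c₂)
    (hnodup : [a₁, a₂, b₁, b₂, c₁, c₂].Nodup) : False := by
  obtain ⟨x, hx⟩ := Cardinal.exists_notMem_of_length_lt [a₁, a₂, b₁, b₂, c₁, c₂]
    (by rw [← Nat.cast_card]; exact_mod_cast h7)
  obtain ⟨s, hxs, hs3, hs⟩ := hin x
  have hpick : ∀ {u w : β}, H.Adj u w → ∃ p ∈ s, p = u ∨ p = w := fun huw =>
    (hs huw).elim (fun h => ⟨_, h, .inl rfl⟩) (fun h => ⟨_, h, .inr rfl⟩)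
  obtain ⟨p, hp, hpa⟩ := hpick ha
  obtain ⟨q, hq, hqb⟩ := hpick hb
  obtain ⟨r, hr, hrc⟩ := hpick hc
  have : 3 < s.ncard := (Set.three_lt_ncard).mpr ⟨x, hxs, p, hp, q, hq, r, hr, by grind⟩
  omega

lemma isVertexCover_of_adj
    (hout : ∀ v, ∃ c, v ∉ c ∧ c.ncard ≤ 3 ∧ H.IsVertexCover c) {v y₁ y₂ y₃ : β}
    (h₁ : H.Adj v y₁) (h₂ : H.Adj v y₂) (h₃ : H.Adj v y₃)
    (h₁₂ : y₁ ≠ y₂) (h₁₃ : y₁ ≠ y₃) (h₂₃ : y₂ ≠ y₃) : H.IsVertexCover {y₁, y₂, y₃} := by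
  obtain ⟨s, hvs, hs3, hs⟩ := hout v
  rwa [← hs.eq_of_adj hs3 hvs h₁ h₂ h₃ h₁₂ h₁₃ h₂₃]

lemma ncard_neighborSet_le
    (hout : ∀ v, ∃ c, v ∉ c ∧ c.ncard ≤ 3 ∧ H.IsVertexCover c) (v : β) :
    (H.neighborSet v).ncard ≤ 3 := by
  obtain ⟨s, hvs, hs3, hs⟩ := hout v
  exact (Set.ncard_le_ncard (hs.neighborSet_subset hvs)).trans hs3

/-- At most one vertex outside the disjoint edges `ab` and `cd` is adjacent to `a` or `b`: two such
vertices either share a neighbour in `{a, b}`, whose three neighbours would then form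
a vertex cover missing `cd`, or give three disjoint edges. -/
lemma not_adj_pair_of_adj_pair (h7 : 6 < Nat.card β)
    (hin : ∀ v, ∃ c, v ∈ c ∧ c.ncard ≤ 3 ∧ H.IsVertexCover c)
    (hout : ∀ v, ∃ c, v ∉ c ∧ c.ncard ≤ 3 ∧ H.IsVertexCover c) {a b c d x x' : β}
    (hab : H.Adj a b) (hcd : H.Adj c d) (hx : H.Adj x a ∨ H.Adj x b)
    (hx' : H.Adj x' a ∨ H.Adj x' b) (hnodup : [x, x', a, b, c, d].Nodup) : False := by
  rcases hx with hx | hx <;> rcases hx' with hx' | hx'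
  · have := isVertexCover_of_adj hout hab hx.symm hx'.symm (by grind) (by grind) (by grind) hcd
    grind
  · exact not_three_disjoint_adj h7 hin hx hx' hcd (by grind)
  · exact not_three_disjoint_adj h7 hin hx hx' hcd (by grind)
  · have := isVertexCover_of_adj hout hab.symm hx.symm hx'.symm (by grind) (by grind) (by grind) hcd
    grind

lemma card_le_six_of_isVertexCover_pair (hadj : ∀ v, ∃ w, H.Adj v w)
    (hout : ∀ v, ∃ c, v ∉ c ∧ c.ncard ≤ 3 ∧ H.IsVertexCover c) {a b : β} (hab : H.Adj a b)
    (hcover : H.IsVertexCover {a, b}) : Nat.card β ≤ 6 := by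
  have huniv : Set.univ ⊆ H.neighborSet a ∪ H.neighborSet b := by
    intro v _
    by_cases hva : v = a
    · exact .inr (hva ▸ hab.symm)
    by_cases hvb : v = b
    · exact .inl (hvb ▸ hab)
    obtain ⟨w, hvw⟩ := hadj v
    rcases hcover hvw with hv | rfl | rfl
    · grind
    · exact .inl hvw.symm
    · exact .inr hvw.symm
  calc Nat.card β = (Set.univ : Set β).ncard := (Set.ncard_univ β).symm
    _ ≤ (H.neighborSet a ∪ H.neighborSet b).ncard := Set.ncard_le_ncard huniv
    _ ≤ (H.neighborSet a).ncard + (H.neighborSet b).ncard := Set.ncard_union_le _ _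
    _ ≤ 6 := by linarith [ncard_neighborSet_le hout a, ncard_neighborSet_le hout b]

lemma ncard_compl_le_two (h7 : 6 < Nat.card β) (hadj : ∀ v, ∃ w, H.Adj v w)
    (hin : ∀ v, ∃ c, v ∈ c ∧ c.ncard ≤ 3 ∧ H.IsVertexCover c)
    (hout : ∀ v, ∃ c, v ∉ c ∧ c.ncard ≤ 3 ∧ H.IsVertexCover c) {a b c d : β}
    (hab : H.Adj a b) (hcd : H.Adj c d) (hca : c ≠ a) (hcb : c ≠ b) (hda : d ≠ a) (hdb : d ≠ b) :
    ({a, b, c, d}ᶜ : Set β).ncard ≤ 2 := by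
  set O : Set β := {a, b, c, d}ᶜ
  have hab' := hab.ne
  have hcd' := hcd.ne
  have hmemO : ∀ {x}, x ∈ O → x ≠ a ∧ x ≠ b ∧ x ≠ c ∧ x ≠ d := by simp [O]
  have hside : O ⊆ {x ∈ O | H.Adj x a ∨ H.Adj x b} ∪ {x ∈ O | H.Adj x c ∨ H.Adj x d} := by
    intro x hx
    obtain ⟨y, hxy⟩ := hadj x
    have := hxy.ne
    have := hmemO hx
    by_contra! hy
    simp only [Set.mem_union, Set.mem_ofPred_eq, not_or] at hy
    have : y ≠ a ∧ y ≠ b ∧ y ≠ c ∧ y ≠ d := by grind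
    exact not_three_disjoint_adj h7 hin hxy hab hcd (by grind)
  have hab₁ : {x ∈ O | H.Adj x a ∨ H.Adj x b}.ncard ≤ 1 :=
    (Set.ncard_le_one_iff).mpr fun hx hx' => by_contra fun hne => by
      have := hmemO hx.1
      have := hmemO hx'.1
      exact not_adj_pair_of_adj_pair h7 hin hout hab hcd hx.2 hx'.2 (by grind)
  have hcd₁ : {x ∈ O | H.Adj x c ∨ H.Adj x d}.ncard ≤ 1 :=
    (Set.ncard_le_one_iff).mpr fun hx hx' => by_contra fun hne => by
      have := hmemO hx.1
      have := hmemO hx'.1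
      exact not_adj_pair_of_adj_pair h7 hin hout hcd hab hx.2 hx'.2 (by grind)
  have := (Set.ncard_le_ncard hside).trans (Set.ncard_union_le _ _)
  omega

theorem card_le_six_of_isVertexCover (hadj : ∀ v, ∃ w, H.Adj v w)
    (hin : ∀ v, ∃ c, v ∈ c ∧ c.ncard ≤ 3 ∧ H.IsVertexCover c)
    (hout : ∀ v, ∃ c, v ∉ c ∧ c.ncard ≤ 3 ∧ H.IsVertexCover c) : Nat.card β ≤ 6 := by
  by_contra! h7
  obtain ⟨a⟩ : Nonempty β := (Nat.card_pos_iff.mp (by omega)).1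
  obtain ⟨b, hab⟩ := hadj a
  by_cases hcover : H.IsVertexCover {a, b}
  · exact absurd (card_le_six_of_isVertexCover_pair hadj hout hab hcover) (by omega)
  obtain ⟨c, d, hcd, ⟨hca, hcb⟩, hda, hdb⟩ :
      ∃ c d, H.Adj c d ∧ (c ≠ a ∧ c ≠ b) ∧ d ≠ a ∧ d ≠ b := by
    simpa [IsVertexCover] using hcover
  have hle : ({a, b, c, d} : Set β).ncard ≤ 4 := by
    grw [Set.ncard_insert_le, Set.ncard_insert_le, Set.ncard_insert_le, Set.ncard_singleton]
  have := ncard_compl_le_two h7 hadj hin hout hab hcd hca hcb hda hdb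
  rw [Set.ncard_compl] at this
  omega

end SimpleGraph

variable {V : Type*} {G : SimpleGraph V} {D : Set (Sym2 V)} {e : Sym2 V}

lemma sharesEndpoint_refl (e : Sym2 V) : SharesEndpoint e e :=
  ⟨e.out.1, e.out_fst_mem, e.out_fst_mem⟩

lemma SharesEndpoint.symm {e f : Sym2 V} (h : SharesEndpoint e f) : SharesEndpoint f e :=
  let ⟨v, he, hf⟩ := h
  ⟨v, hf, he⟩

def edgeNbhd (G : SimpleGraph V) (e : Sym2 V) : Set (Sym2 V) :=
  {f ∈ G.edgeSet | SharesEndpoint e f}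

lemma mem_edgeNbhd_self (he : e ∈ G.edgeSet) : e ∈ edgeNbhd G e :=
  ⟨he, sharesEndpoint_refl e⟩

lemma IsEdgeDominating.inter_edgeNbhd_nonempty (hD : IsEdgeDominating G D)
    (he : e ∈ G.edgeSet) : (D ∩ edgeNbhd G e).Nonempty := by
  by_cases heD : e ∈ D
  · exact ⟨e, heD, mem_edgeNbhd_self he⟩
  · obtain ⟨f, hfD, hef⟩ := hD.2 e ⟨he, heD⟩
    exact ⟨f, hfD, hD.1 hfD, hef⟩

lemma exists_inter_edgeNbhd_eq_empty (hD : D ⊆ G.edgeSet) (h : ¬ IsEdgeDominating G D) :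
    ∃ e ∈ G.edgeSet, D ∩ edgeNbhd G e = ∅ := by
  simp only [IsEdgeDominating, hD, true_and, not_forall, not_exists, not_and] at h
  obtain ⟨e, ⟨he, -⟩, hnot⟩ := h
  exact ⟨e, he, Set.eq_empty_of_forall_notMem fun f ⟨hfD, _, hef⟩ => hnot f hfD hef⟩

lemma IsEdgeDominating.edgeSet_subset_edgeNbhd (h : IsEdgeDominating G {e}) :
    G.edgeSet ⊆ edgeNbhd G e := by
  intro f hf
  obtain ⟨g, rfl, hg⟩ := h.inter_edgeNbhd_nonempty hf
  exact ⟨hf, hg.2.symm⟩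

lemma edgeNbhd_mk (u v : V) : edgeNbhd G s(u, v) = G.incidenceSet u ∪ G.incidenceSet v := by
  ext f
  simp [edgeNbhd, incidenceSet, SharesEndpoint]

lemma ncard_edgeNbhd_le [Fintype V] [DecidableRel G.Adj] (hG : G.maxDegree ≤ 2)
    (he : e ∈ G.edgeSet) : (edgeNbhd G e).ncard ≤ 3 := by
  classical
  induction e using Sym2.ind with | h u v => ?_
  have hinter := G.incidenceSet_inter_incidenceSet_of_adj he
  have hdeg : ∀ w, (G.incidenceSet w).ncard ≤ 2 := fun w => by
    rw [Set.ncard_eq_toFinset_card', ← incidenceFinset, card_incidenceFinset_eq_degree]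
    exact (G.degree_le_maxDegree w).trans hG
  have := Set.ncard_union_add_ncard_inter (G.incidenceSet u) (G.incidenceSet v)
  rw [hinter, Set.ncard_singleton] at this
  rw [edgeNbhd_mk]
  linarith [hdeg u, hdeg v]

def coalitionGraph (G : SimpleGraph V) (P : Set (Set (Sym2 V))) : SimpleGraph P where
  Adj A B := A ≠ B ∧ IsEdgeDominating G (A.1 ∪ B.1)
  symm := ⟨fun _ _ h => ⟨h.1.symm, Set.union_comm _ _ ▸ h.2⟩⟩
  loopless := ⟨fun _ h => h.1 rfl⟩

variable {P : Set (Set (Sym2 V))}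

@[simp]
lemma coalitionGraph_adj {A B : P} :
    (coalitionGraph G P).Adj A B ↔ A ≠ B ∧ IsEdgeDominating G (A.1 ∪ B.1) :=
  Iff.rfl

lemma isVertexCover_coalitionGraph (he : e ∈ G.edgeSet) :
    (coalitionGraph G P).IsVertexCover {A | (A.1 ∩ edgeNbhd G e).Nonempty} := by
  intro A B hAB
  obtain ⟨f, hf | hf, hfN⟩ := (coalitionGraph_adj.mp hAB).2.inter_edgeNbhd_nonempty he
  exacts [.inl ⟨f, hf, hfN⟩, .inr ⟨f, hf, hfN⟩]

lemma ncard_setOf_inter_edgeNbhd_nonempty_le [Fintype V] [DecidableRel G.Adj]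
    (hG : G.maxDegree ≤ 2) (hP : P.Pairwise Disjoint) (he : e ∈ G.edgeSet) :
    {A : P | (A.1 ∩ edgeNbhd G e).Nonempty}.ncard ≤ 3 :=
  (Set.ncard_le_of_pairwise_disjoint_inter_nonempty (Set.toFinite _)
    (fun A B hAB => hP A.2 B.2 (Subtype.coe_ne_coe.mpr hAB)) fun _ h => h).trans
    (ncard_edgeNbhd_le hG he)

lemma not_isEdgeDominating_singleton [Fintype V] [DecidableRel G.Adj] (hG : G.maxDegree ≤ 2)
    (hE : 3 < G.edgeSet.ncard) : ¬ IsEdgeDominating G {e} := fun h =>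
  absurd ((Set.ncard_le_ncard h.edgeSet_subset_edgeNbhd).trans
    (ncard_edgeNbhd_le hG (h.1 rfl))) (by omega)

namespace IsECPartition

lemma subset_edgeSet (hP : IsECPartition G P) {A : Set (Sym2 V)} (hA : A ∈ P) :
    A ⊆ G.edgeSet :=
  hP.2.2.1 ▸ Set.subset_sUnion_of_mem hA

lemma ncard_le_ncard_edgeSet [Finite V] (hP : IsECPartition G P) :
    P.ncard ≤ G.edgeSet.ncard := by
  rw [← Nat.card_coe_set_eq, ← Set.ncard_univ]
  refine Set.ncard_le_of_pairwise_disjoint_inter_nonempty (Set.toFinite _)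
    (fun A B hAB => hP.2.1 A.2 B.2 (Subtype.coe_ne_coe.mpr hAB)) fun A _ => ?_
  obtain ⟨e, he⟩ := hP.1 A A.2
  exact ⟨e, he, hP.subset_edgeSet A.2 he⟩

theorem ncard_le_six [Fintype V] [DecidableRel G.Adj] (hG : G.maxDegree ≤ 2)
    (hP : IsECPartition G P) : P.ncard ≤ 6 := by
  by_cases hE : G.edgeSet.ncard ≤ 6
  · exact hP.ncard_le_ncard_edgeSet.trans hE
  have hpart (A : P) : ¬ IsEdgeDominating G A ∧ ∃ B ∈ P, B ≠ A ∧ IsEdgeCoalition G A B :=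
    (hP.2.2.2 A A.2).resolve_left fun ⟨⟨e, he⟩, hdom⟩ =>
      not_isEdgeDominating_singleton hG (by omega) (he ▸ hdom)
  rw [← Nat.card_coe_set_eq]
  refine card_le_six_of_isVertexCover (H := coalitionGraph G P) (fun A => ?_) (fun A => ?_)
    (fun A => ?_)
  · obtain ⟨-, B, hB, hBA, hAB⟩ := hpart A
    exact ⟨⟨B, hB⟩, coalitionGraph_adj.mpr ⟨fun h => hBA (congrArg Subtype.val h).symm, hAB.2.2.2⟩⟩
  · obtain ⟨e, he⟩ := hP.1 A A.2
    have he' := hP.subset_edgeSet A.2 he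
    exact ⟨{B | (B.1 ∩ edgeNbhd G e).Nonempty}, ⟨e, he, mem_edgeNbhd_self he'⟩,
      ncard_setOf_inter_edgeNbhd_nonempty_le hG hP.2.1 he', isVertexCover_coalitionGraph he'⟩
  · obtain ⟨e, he, hAe⟩ := exists_inter_edgeNbhd_eq_empty (hP.subset_edgeSet A.2) (hpart A).1
    exact ⟨{B | (B.1 ∩ edgeNbhd G e).Nonempty}, fun h => h.ne_empty hAe,
      ncard_setOf_inter_edgeNbhd_nonempty_le hG hP.2.1 he, isVertexCover_coalitionGraph he⟩

end IsECPartition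

theorem edgeCoalitionNumber_le_six [Fintype V] [DecidableRel G.Adj] (hG : G.maxDegree ≤ 2) :
    edgeCoalitionNumber G ≤ 6 :=
  csSup_le' fun _ ⟨_, hP, hk⟩ => hk ▸ hP.ncard_le_six hG

lemma maxDegree_cycleGraph_le (n : ℕ) : (cycleGraph n).maxDegree ≤ 2 := by
  refine maxDegree_le_of_forall_degree_le _ _ fun v => ?_
  match n with
  | 0 => exact v.elim0
  | 1 => simp [degree]
  | n + 2 => exact cycleGraph_degree_two_le ▸ Finset.card_le_two

theorem edgeCoalitionNumber_cycleGraph_le_general (n : ℕ) :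
    edgeCoalitionNumber (SimpleGraph.cycleGraph n) ≤ 6 :=
  edgeCoalitionNumber_le_six (maxDegree_cycleGraph_le n)

/-- For every cycle `C_n` with `n ≥ 3`, `EC(C_n) ≤ 6`. -/
theorem edgeCoalitionNumber_cycleGraph_le (n : ℕ) (hn : 3 ≤ n) :
    edgeCoalitionNumber (SimpleGraph.cycleGraph n) ≤ 6 :=
  edgeCoalitionNumber_cycleGraph_le_general n
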